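/- arXiv:1508.07056 — 6 statements merged into one kernel-verified Lean document; each statement's English description precedes it below -/
import Mathlib

section
/- Let k ≥ 1 be an integer and let c : ℤ → ℤ be the coefficient function of the symmetrized Alexander polynomial of the pretzel knot P(-2,3,4k+3), and for j ≥ 0 define the torsion coefficient t(j) = Σ_{n ≥ 1} n · c(j+n). Then t(j) = k + 1 − ⌊j/2⌋ for 0 ≤ j ≤ 2k+1, t(2k+2) = 1, and t(j) = 0 for all j ≥ 2k+3. -/
/-
Since `c` vanishes beyond `2k + 3`, each torsion coefficient `t(j)` with `j ≥ 0` is a finite sum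
`∑_{i < 2k+3-j} (i+1) c(j+i+1)`. For `j ≤ 2k`, put `N = 2k - j`: the last three terms, at the
coefficients `c(2k+1) = 0`, `c(2k+2) = -1`, `c(2k+3) = 1`, contribute `-(N+2) + (N+3) = 1`, and
the first `N` terms form the alternating sum `±(1 - 2 + 3 - ⋯)` whose sign makes it equal to
`⌈N/2⌉ = k - ⌊j/2⌋`. The cases `j ≥ 2k+1` only involve those last (at most two) terms.
-/

open Finset

theorem finsum_mem_one_le_eq_sum_range {M : Type*} [AddCommMonoid M] (f : ℤ → M) (N : ℕ)
    (hf : ∀ n : ℤ, N < n → f n = 0) :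
    ∑ᶠ n ∈ {n : ℤ | 1 ≤ n}, f n = ∑ i ∈ range N, f (i + 1) := by
  have hrange : {n : ℤ | 1 ≤ n} = Set.range (fun i : ℕ => (i : ℤ) + 1) := by
    ext n
    simp only [Set.mem_ofPred_eq, Set.mem_range]
    exact ⟨fun h => ⟨(n - 1).toNat, by omega⟩, fun ⟨i, hi⟩ => by omega⟩
  rw [hrange, finsum_mem_range (fun a b h => by simpa using h)]
  refine finsum_eq_sum_of_support_subset _ fun i hi => ?_
  by_contra hN
  rw [coe_range, Set.mem_Iio, not_lt] at hN
  exact hi (hf _ (by omega))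

theorem sum_range_neg_one_pow_mul (N : ℕ) :
    ∑ i ∈ range N, (-1 : ℤ) ^ (N + i + 1) * (i + 1) = (N + 1) / 2 := by
  induction N with
  | zero => simp
  | succ N ih =>
    have hflip : ∑ i ∈ range N, (-1 : ℤ) ^ (N + 1 + i + 1) * (i + 1)
        = -∑ i ∈ range N, (-1 : ℤ) ^ (N + i + 1) * (i + 1) := by
      rw [← sum_neg_distrib]
      exact sum_congr rfl fun i _ => by ring
    rw [sum_range_succ, hflip, ih, show N + 1 + N + 1 = 2 * (N + 1) by ring, pow_mul,
      neg_one_sq, one_pow, one_mul]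
    omega

noncomputable def torsionCoeff (c : ℤ → ℤ) (j : ℤ) : ℤ :=
  ∑ᶠ n ∈ {n : ℤ | 1 ≤ n}, n * c (j + n)

theorem torsionCoeff_natCast_eq_sum_range {c : ℤ → ℤ} (M : ℕ)
    (hc : ∀ m : ℤ, M < m → c m = 0) (j : ℕ) :
    torsionCoeff c j = ∑ i ∈ range (M - j), ((i : ℤ) + 1) * c ↑(j + i + 1) := by
  rw [torsionCoeff, finsum_mem_one_le_eq_sum_range _ (M - j)
    fun n hn => by rw [hc _ (by omega), mul_zero]]
  push_cast
  simp only [add_assoc]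

def pretzelCoeff (k : ℕ) (i : ℤ) : ℤ :=
  if i = 0 then 1
  else if i.natAbs ≤ 2 * k then (-1 : ℤ) ^ i.natAbs
  else if i.natAbs = 2 * k + 2 then -1
  else if i.natAbs = 2 * k + 3 then 1
  else 0

section
variable (k : ℕ)

theorem pretzelCoeff_eq_zero_of_lt {m : ℤ} (hm : 2 * k + 3 < m) : pretzelCoeff k m = 0 := by
  unfold pretzelCoeff; split_ifs <;> omega

theorem pretzelCoeff_natCast_of_le {m : ℕ} (h₁ : 1 ≤ m) (h₂ : m ≤ 2 * k) :
    pretzelCoeff k m = (-1) ^ m := by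
  unfold pretzelCoeff; split_ifs <;> first | rfl | omega

theorem pretzelCoeff_two_mul_add_one : pretzelCoeff k ↑(2 * k + 1) = 0 := by
  unfold pretzelCoeff; split_ifs <;> first | rfl | omega

theorem pretzelCoeff_two_mul_add_two : pretzelCoeff k ↑(2 * k + 2) = -1 := by
  unfold pretzelCoeff; split_ifs <;> first | rfl | omega

theorem pretzelCoeff_two_mul_add_three : pretzelCoeff k ↑(2 * k + 3) = 1 := by
  unfold pretzelCoeff; split_ifs <;> first | rfl | omega

theorem torsionCoeff_pretzelCoeff (j : ℕ) :
    torsionCoeff (pretzelCoeff k) j =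
      ∑ i ∈ range (2 * k + 3 - j), ((i : ℤ) + 1) * pretzelCoeff k ↑(j + i + 1) :=
  torsionCoeff_natCast_eq_sum_range _ (fun _ hm => pretzelCoeff_eq_zero_of_lt k (by omega)) j

theorem torsionCoeff_pretzelCoeff_of_add_eq {j N : ℕ} (h : j + N = 2 * k) :
    torsionCoeff (pretzelCoeff k) j = ((N : ℤ) + 1) / 2 + 1 := by
  have hbody : ∀ i ∈ range N, ((i : ℤ) + 1) * pretzelCoeff k ↑(j + i + 1)
      = (-1) ^ (N + i + 1) * (i + 1) := by
    intro i hi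
    rw [mem_range] at hi
    rw [pretzelCoeff_natCast_of_le k (by omega) (by omega), neg_one_pow_eq_pow_mod_two,
      show (j + i + 1) % 2 = (N + i + 1) % 2 by omega, ← neg_one_pow_eq_pow_mod_two, mul_comm]
  rw [torsionCoeff_pretzelCoeff, show 2 * k + 3 - j = N + 3 by omega, sum_range_succ,
    sum_range_succ, sum_range_succ, sum_congr rfl hbody, sum_range_neg_one_pow_mul,
    show j + N + 1 = 2 * k + 1 by omega, show j + (N + 1) + 1 = 2 * k + 2 by omega,
    show j + (N + 2) + 1 = 2 * k + 3 by omega, pretzelCoeff_two_mul_add_one,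
    pretzelCoeff_two_mul_add_two, pretzelCoeff_two_mul_add_three]
  push_cast
  ring

theorem torsionCoeff_pretzelCoeff_two_mul_add_one :
    torsionCoeff (pretzelCoeff k) ↑(2 * k + 1) = 1 := by
  rw [torsionCoeff_pretzelCoeff, show 2 * k + 3 - (2 * k + 1) = 2 by omega, sum_range_succ,
    sum_range_one, show 2 * k + 1 + 0 + 1 = 2 * k + 2 by omega,
    show 2 * k + 1 + 1 + 1 = 2 * k + 3 by omega, pretzelCoeff_two_mul_add_two,
    pretzelCoeff_two_mul_add_three]
  norm_num

theorem torsionCoeff_pretzelCoeff_two_mul_add_two :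
    torsionCoeff (pretzelCoeff k) ↑(2 * k + 2) = 1 := by
  rw [torsionCoeff_pretzelCoeff, show 2 * k + 3 - (2 * k + 2) = 1 by omega, sum_range_one,
    show 2 * k + 2 + 0 + 1 = 2 * k + 3 by omega, pretzelCoeff_two_mul_add_three]
  norm_num

theorem torsionCoeff_pretzelCoeff_eq_zero_of_le {j : ℕ} (hj : 2 * k + 3 ≤ j) :
    torsionCoeff (pretzelCoeff k) j = 0 := by
  rw [torsionCoeff_pretzelCoeff, Nat.sub_eq_zero_of_le hj, sum_range_zero]

end

theorem pretzel_4k3_torsion_coefficients_general (k : ℕ) (c : ℤ → ℤ)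
    (hc : ∀ i : ℤ, c i =
      if i = 0 then 1
      else if i.natAbs ≤ 2 * k then (-1 : ℤ) ^ i.natAbs
      else if i.natAbs = 2 * k + 2 then -1
      else if i.natAbs = 2 * k + 3 then 1
      else 0)
    (t : ℤ → ℤ)
    (ht : ∀ j : ℤ, t j = ∑ᶠ n ∈ {n : ℤ | 1 ≤ n}, n * c (j + n)) :
    ∀ j : ℤ, 0 ≤ j →
      ((j ≤ 2 * k + 1 → t j = k + 1 - ⌊(j : ℚ) / 2⌋) ∧
       (j = 2 * k + 2 → t j = 1) ∧
       (2 * k + 3 ≤ j → t j = 0)) := by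
  obtain rfl : c = pretzelCoeff k := funext hc
  obtain rfl : t = torsionCoeff (pretzelCoeff k) := funext ht
  intro j hj
  lift j to ℕ using hj
  refine ⟨fun hj => ?_, fun hj => ?_,
    fun hj => torsionCoeff_pretzelCoeff_eq_zero_of_le k (by omega)⟩
  · have hfloor : ⌊((j : ℤ) : ℚ) / 2⌋ = (j : ℤ) / 2 :=
      mod_cast Rat.floor_intCast_div_natCast j 2
    rw [hfloor]
    obtain hj | rfl : j ≤ 2 * k ∨ j = 2 * k + 1 := by omega
    · obtain ⟨N, hN⟩ := Nat.exists_eq_add_of_le hj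
      rw [torsionCoeff_pretzelCoeff_of_add_eq k hN.symm]
      omega
    · rw [torsionCoeff_pretzelCoeff_two_mul_add_one]
      omega
  · obtain rfl : j = 2 * k + 2 := by omega
    exact torsionCoeff_pretzelCoeff_two_mul_add_two k

theorem pretzel_4k3_torsion_coefficients (k : ℕ) (hk : 1 ≤ k) (c : ℤ → ℤ)
    (hc : ∀ i : ℤ, c i =
      if i = 0 then 1
      else if i.natAbs ≤ 2 * k then (-1 : ℤ) ^ i.natAbs
      else if i.natAbs = 2 * k + 2 then -1
      else if i.natAbs = 2 * k + 3 then 1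
      else 0)
    (t : ℤ → ℤ)
    (ht : ∀ j : ℤ, t j = ∑ᶠ n ∈ {n : ℤ | 1 ≤ n}, n * c (j + n)) :
    ∀ j : ℤ, 0 ≤ j →
      ((j ≤ 2 * k + 1 → t j = k + 1 - ⌊(j : ℚ) / 2⌋) ∧
       (j = 2 * k + 2 → t j = 1) ∧
       (2 * k + 3 ≤ j → t j = 0)) :=
  pretzel_4k3_torsion_coefficients_general k c hc t ht
end

section
/- Let k ≥ 1 be an integer and let c : ℤ → ℤ be the coefficient function of the symmetrized Alexander polynomial of the pretzel knot P(-2,3,4k+1), and for j ≥ 0 define the torsion coefficient t(j) = Σ_{n ≥ 1} n · c(j+n). Then t(j) = k + 1 − ⌊(j+1)/2⌋ for 0 ≤ j ≤ 2k, t(2k+1) = 1, and t(j) = 0 for all j ≥ 2k+2. -/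
/-!
Writing `t(j) = ∑ₘ max (m - j) 0 · c(m)`, the second difference of `t` is `c`:
`t(j - 1) = 2 t(j) - t(j + 1) + c(j)`, and `t` vanishes from the top degree `2k + 2` of `Δ` on.
The claimed closed form satisfies the same recursion and vanishes there too, so the two agree by
downward induction.
-/

open Finset

section torsionCoeff

variable {c : ℤ → ℤ} {N : ℤ}

theorem torsionCoeff_eq_finsum_max (j : ℤ) :
    torsionCoeff c j = ∑ᶠ m, max (m - j) 0 * c m := by
  rw [torsionCoeff, finsum_mem_def]
  refine finsum_eq_of_bijective (· + j) (Equiv.addRight j).bijective fun n => ?_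
  by_cases hn : 1 ≤ n
  · rw [Set.indicator_of_mem (show n ∈ {n : ℤ | 1 ≤ n} from hn), add_sub_cancel_right, add_comm,
      max_eq_left (by omega)]
  · rw [Set.indicator_of_notMem (show n ∉ {n : ℤ | 1 ≤ n} from hn), add_sub_cancel_right,
      max_eq_right (by omega), zero_mul]

theorem torsionCoeff_eq_sum_Icc (hc : ∀ m, N < m → c m = 0) {L j : ℤ} (hL : L ≤ j) :
    torsionCoeff c j = ∑ m ∈ Icc L N, max (m - j) 0 * c m := by
  rw [torsionCoeff_eq_finsum_max]
  refine finsum_eq_sum_of_support_subset _ fun m hm => ?_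
  rw [Function.mem_support] at hm
  rw [coe_Icc, Set.mem_Icc]
  constructor
  · by_contra h
    exact hm (by rw [max_eq_right (by omega), zero_mul])
  · by_contra h
    exact hm (by rw [hc m (by omega), mul_zero])

theorem torsionCoeff_eq_zero_of_le (hc : ∀ m, N < m → c m = 0) {j : ℤ} (hj : N ≤ j) :
    torsionCoeff c j = 0 := by
  rw [torsionCoeff_eq_sum_Icc hc le_rfl]
  refine sum_eq_zero fun m hm => ?_
  rw [mem_Icc] at hm
  rw [max_eq_right (by omega), zero_mul]

/-- As a function of `j`, the weight `max (m - j) 0` is a ramp whose second difference is the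
indicator of `j = m`. -/
theorem torsionCoeff_sub_one (hc : ∀ m, N < m → c m = 0) {j : ℤ} (hj : j ≤ N) :
    torsionCoeff c (j - 1) = 2 * torsionCoeff c j - torsionCoeff c (j + 1) + c j := by
  have hweight : ∀ m, max (m - (j - 1)) 0 * c m =
      2 * (max (m - j) 0 * c m) - max (m - (j + 1)) 0 * c m + if m = j then c m else 0 := by
    intro m
    have hramp : max (m - (j - 1)) 0 =
        2 * max (m - j) 0 - max (m - (j + 1)) 0 + if m = j then 1 else 0 := by
      split_ifs <;> omega
    rw [hramp]
    split_ifs <;> ring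
  rw [torsionCoeff_eq_sum_Icc hc (L := j - 1) le_rfl,
    torsionCoeff_eq_sum_Icc hc (L := j - 1) (by omega),
    torsionCoeff_eq_sum_Icc hc (L := j - 1) (by omega), sum_congr rfl fun m _ => hweight m,
    sum_add_distrib, sum_sub_distrib, ← mul_sum, sum_ite_eq', if_pos (mem_Icc.2 ⟨by omega, hj⟩)]

theorem torsionCoeff_eq_of_recursion (hc : ∀ m, N < m → c m = 0) {g : ℤ → ℤ} {a : ℤ}
    (hg : ∀ j, a < j → j ≤ N → g (j - 1) = 2 * g j - g (j + 1) + c j)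
    (hg_zero : ∀ j, N ≤ j → g j = 0) {j : ℤ} (hj : a ≤ j) :
    torsionCoeff c j = g j := by
  rcases le_or_gt N j with hNj | hjN
  · rw [torsionCoeff_eq_zero_of_le hc hNj, hg_zero j hNj]
  have hpair : ∀ i ≤ N, a ≤ i →
      torsionCoeff c i = g i ∧ torsionCoeff c (i + 1) = g (i + 1) := by
    refine Int.leInductionDown ?_ fun i hiN ih hai => ?_
    · intro _
      rw [torsionCoeff_eq_zero_of_le hc le_rfl, torsionCoeff_eq_zero_of_le hc (by omega),
        hg_zero N le_rfl, hg_zero (N + 1) (by omega)]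
      exact ⟨rfl, rfl⟩
    · obtain ⟨hi, hi1⟩ := ih (by omega)
      rw [sub_add_cancel, torsionCoeff_sub_one hc hiN, hg i (by omega) hiN, hi, hi1]
      exact ⟨rfl, rfl⟩
  exact (hpair j hjN.le hj).1

end torsionCoeff

def pretzelAlexanderCoeff (k : ℕ) (i : ℤ) : ℤ :=
  if i = 0 then -1
  else if i.natAbs ≤ 2 * k - 1 then (-1 : ℤ) ^ (i.natAbs + 1)
  else if i.natAbs = 2 * k + 1 then -1
  else if i.natAbs = 2 * k + 2 then 1
  else 0

def pretzelTorsionCoeff (k : ℕ) (j : ℤ) : ℤ :=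
  if j ≤ 2 * k then k + 1 - (j + 1) / 2 else if j = 2 * k + 1 then 1 else 0

theorem pretzelAlexanderCoeff_of_pos (k : ℕ) {i : ℤ} (hi : 0 < i) :
    pretzelAlexanderCoeff k i =
      if i < 2 * k then (if i % 2 = 0 then -1 else 1)
      else if i = 2 * k + 1 then -1
      else if i = 2 * k + 2 then 1
      else 0 := by
  simp only [pretzelAlexanderCoeff, neg_one_pow_eq_ite, Nat.even_iff]
  split_ifs <;> omega

theorem pretzelAlexanderCoeff_eq_zero_of_lt (k : ℕ) {i : ℤ} (hi : 2 * k + 2 < i) :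
    pretzelAlexanderCoeff k i = 0 := by
  rw [pretzelAlexanderCoeff_of_pos k (by omega)]
  split_ifs <;> omega

theorem pretzelTorsionCoeff_sub_one (k : ℕ) {j : ℤ} (hj₁ : 0 < j) (hj₂ : j ≤ 2 * k + 2) :
    pretzelTorsionCoeff k (j - 1) =
      2 * pretzelTorsionCoeff k j - pretzelTorsionCoeff k (j + 1) + pretzelAlexanderCoeff k j := by
  rw [pretzelAlexanderCoeff_of_pos k hj₁]
  simp only [pretzelTorsionCoeff]
  split_ifs <;> omega

theorem pretzel_4k1_torsion_coefficients_general (k : ℕ) (c : ℤ → ℤ)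
    (hc : ∀ i : ℤ, c i =
      if i = 0 then -1
      else if i.natAbs ≤ 2 * k - 1 then (-1 : ℤ) ^ (i.natAbs + 1)
      else if i.natAbs = 2 * k + 1 then -1
      else if i.natAbs = 2 * k + 2 then 1
      else 0)
    (t : ℤ → ℤ)
    (ht : ∀ j : ℤ, t j = ∑ᶠ n ∈ {n : ℤ | 1 ≤ n}, n * c (j + n)) :
    ∀ j : ℤ, 0 ≤ j →
      ((j ≤ 2 * k → t j = k + 1 - ⌊((j : ℚ) + 1) / 2⌋) ∧
       (j = 2 * k + 1 → t j = 1) ∧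
       (2 * k + 2 ≤ j → t j = 0)) := by
  obtain rfl : c = pretzelAlexanderCoeff k := funext hc
  obtain rfl : t = torsionCoeff (pretzelAlexanderCoeff k) := funext ht
  intro j hj
  have htj : torsionCoeff (pretzelAlexanderCoeff k) j = pretzelTorsionCoeff k j :=
    torsionCoeff_eq_of_recursion (N := 2 * k + 2) (a := 0)
      (fun _ => pretzelAlexanderCoeff_eq_zero_of_lt k)
      (fun _ hj₁ hj₂ => pretzelTorsionCoeff_sub_one k hj₁ hj₂)
      (fun i hi => by rw [pretzelTorsionCoeff, if_neg (by omega), if_neg (by omega)]) hj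
  have hfloor : ⌊((j : ℚ) + 1) / 2⌋ = (j + 1) / 2 := by
    exact_mod_cast Rat.floor_intCast_div_natCast (j + 1) 2
  rw [htj, hfloor, pretzelTorsionCoeff]
  refine ⟨fun h => ?_, fun h => ?_, fun h => ?_⟩ <;> split_ifs <;> omega

theorem pretzel_4k1_torsion_coefficients (k : ℕ) (hk : 1 ≤ k) (c : ℤ → ℤ)
    (hc : ∀ i : ℤ, c i =
      if i = 0 then -1
      else if i.natAbs ≤ 2 * k - 1 then (-1 : ℤ) ^ (i.natAbs + 1)
      else if i.natAbs = 2 * k + 1 then -1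
      else if i.natAbs = 2 * k + 2 then 1
      else 0)
    (t : ℤ → ℤ)
    (ht : ∀ j : ℤ, t j = ∑ᶠ n ∈ {n : ℤ | 1 ≤ n}, n * c (j + n)) :
    ∀ j : ℤ, 0 ≤ j →
      ((j ≤ 2 * k → t j = k + 1 - ⌊((j : ℚ) + 1) / 2⌋) ∧
       (j = 2 * k + 1 → t j = 1) ∧
       (2 * k + 2 ≤ j → t j = 0)) :=
  pretzel_4k1_torsion_coefficients_general k c hc t ht
end

section
/- Let q ≥ 4 be an integer, let c_q : ℤ → ℤ be the coefficient function of the symmetrized Alexander polynomial of the pretzel knot P(-2,3,2q+1), and for j ≥ 0 set t_q(j) = Σ_{n ≥ 1} n · c_q(j+n). Then for every integer j with 0 ≤ j ≤ q+1, the rational number (2q+3−2j)²/(4(2q+3)) − 1/4 − 2·t_q(j) is strictly negative. (By the Ozsváth–Szabó/Owens–Strle d-invariant formula d(K_n, ±j) = (n−2j)²/(4n) − 1/4 − 2t_j(K) for an L-space knot K, this says that all correction terms of the (2q+3)-surgery M_q on S³ along P(-2,3,2q+1) are negative.) -/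
/- Let q ≥ 4, let c be the coefficient function of the symmetrized Alexander
polynomial of P(-2,3,2q+1): c(0) = (−1)^{q−1}, c(±j) = (−1)^{q−1−j} for
1 ≤ j ≤ q−1, c(±(q+1)) = −1, c(±(q+2)) = 1, c(i) = 0 otherwise, and let
t(j) = Σ_{n ≥ 1} n·c(j+n) be the torsion coefficients.  Then for every
0 ≤ j ≤ q+1, the correction term
(2q+3−2j)²/(4(2q+3)) − 1/4 − 2·t(j) is strictly negative. -/
theorem d_invariants_negative_M_q (q : ℕ) (hq : 4 ≤ q) (c : ℤ → ℤ)
    (hc : ∀ i : ℤ, c i =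
      if i = 0 then (-1 : ℤ) ^ (q - 1)
      else if i.natAbs ≤ q - 1 then (-1 : ℤ) ^ (q - 1 - i.natAbs)
      else if i.natAbs = q + 1 then -1
      else if i.natAbs = q + 2 then 1
      else 0)
    (t : ℤ → ℤ)
    (ht : ∀ j : ℤ, t j = ∑ᶠ n ∈ {n : ℤ | 1 ≤ n}, n * c (j + n)) :
    ∀ j : ℤ, 0 ≤ j → j ≤ q + 1 →
      (2 * (q : ℚ) + 3 - 2 * (j : ℚ)) ^ 2 / (4 * (2 * (q : ℚ) + 3))
        - 1 / 4 - 2 * ((t j : ℤ) : ℚ) < 0 := by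
  -- basic values of c
  have hc_top : ∀ i : ℤ, (q : ℤ) + 2 < i → c i = 0 := by
    intro i hi
    rw [hc i]
    split_ifs <;> first | rfl | (exfalso; omega)
  have hcq : c (q : ℤ) = 0 := by
    rw [hc]
    split_ifs <;> first | rfl | (exfalso; omega)
  have hcq1 : c ((q : ℤ) + 1) = -1 := by
    rw [hc]
    split_ifs <;> first | rfl | (exfalso; omega)
  have hcq2 : c ((q : ℤ) + 2) = 1 := by
    rw [hc]
    split_ifs <;> first | rfl | (exfalso; omega)
  have hcnat : ∀ m : ℕ, 1 ≤ m → m ≤ q - 1 → c (m : ℤ) = (-1) ^ (q - 1 - m) := by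
    intro m h1 h2
    rw [hc]
    split_ifs with H1 H2 <;> first | (exfalso; omega) | simp
  -- t as a concrete finite sum
  have hTsum : ∀ j : ℤ, 0 ≤ j →
      t j = ∑ n ∈ Finset.Icc (1 : ℤ) ((q : ℤ) + 3), n * c (j + n) := by
    intro j hj
    rw [ht j]
    apply finsum_mem_eq_sum_of_inter_support_eq
    ext n
    simp only [Set.mem_inter_iff, Set.mem_setOf_eq, Function.mem_support, Finset.coe_Icc,
      Set.mem_Icc]
    constructor
    · rintro ⟨h1, h2⟩
      refine ⟨⟨h1, ?_⟩, h2⟩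
      by_contra h
      push_neg at h
      exact h2 (by rw [hc_top (j + n) (by omega), mul_zero])
    · rintro ⟨⟨h1, _⟩, h2⟩
      exact ⟨h1, h2⟩
  -- base cases: t (q-1) = t q = t (q+1) = 1
  have hbase : ∀ j : ℤ, (q : ℤ) - 1 ≤ j → j ≤ (q : ℤ) + 1 → t j = 1 := by
    intro j h1 h2
    rw [hTsum j (by omega)]
    have hsub : ({1, 2, 3} : Finset ℤ) ⊆ Finset.Icc (1 : ℤ) ((q : ℤ) + 3) := by
      intro x hx
      simp only [Finset.mem_insert, Finset.mem_singleton] at hx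
      simp only [Finset.mem_Icc]
      omega
    have hzero : ∀ x ∈ Finset.Icc (1 : ℤ) ((q : ℤ) + 3),
        x ∉ ({1, 2, 3} : Finset ℤ) → x * c (j + x) = 0 := by
      intro x hx hnx
      simp only [Finset.mem_Icc] at hx
      simp only [Finset.mem_insert, Finset.mem_singleton] at hnx
      push_neg at hnx
      rw [hc_top (j + x) (by omega), mul_zero]
    rw [← Finset.sum_subset hsub hzero]
    rw [Finset.sum_insert (by norm_num), Finset.sum_insert (by norm_num),
      Finset.sum_singleton]
    have hj : j = (q : ℤ) - 1 ∨ j = (q : ℤ) ∨ j = (q : ℤ) + 1 := by omega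
    rcases hj with rfl | rfl | rfl
    · rw [show (q : ℤ) - 1 + 1 = (q : ℤ) by ring, show (q : ℤ) - 1 + 2 = (q : ℤ) + 1 by ring,
        show (q : ℤ) - 1 + 3 = (q : ℤ) + 2 by ring, hcq, hcq1, hcq2]
      ring
    · rw [hcq1, hcq2, hc_top ((q : ℤ) + 3) (by omega)]
      ring
    · rw [show (q : ℤ) + 1 + 1 = (q : ℤ) + 2 by ring, hcq2,
        hc_top ((q : ℤ) + 1 + 2) (by omega), hc_top ((q : ℤ) + 1 + 3) (by omega)]
      ring
  -- alternating partial sums of c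
  have hpar : ∀ k : ℕ, k ≤ q - 1 →
      (∑ i ∈ Finset.Icc ((q : ℤ) - k) ((q : ℤ) + 2), c i) = if Even k then 0 else 1 := by
    intro k
    induction k with
    | zero =>
      intro _
      have hset : Finset.Icc ((q : ℤ) - (0 : ℕ)) ((q : ℤ) + 2)
          = {(q : ℤ), (q : ℤ) + 1, (q : ℤ) + 2} := by
        ext x
        simp only [Finset.mem_Icc, Finset.mem_insert, Finset.mem_singleton]
        omega
      rw [hset, Finset.sum_insert (by simp), Finset.sum_insert (by simp),
        Finset.sum_singleton, hcq, hcq1, hcq2]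
      simp
    | succ k ih =>
      intro hk
      have hik := ih (by omega)
      have hsplit : Finset.Icc ((q : ℤ) - (k + 1 : ℕ)) ((q : ℤ) + 2)
          = insert ((q : ℤ) - (k + 1 : ℕ)) (Finset.Icc ((q : ℤ) - k) ((q : ℤ) + 2)) := by
        ext x
        simp only [Finset.mem_Icc, Finset.mem_insert]
        push_cast
        omega
      rw [hsplit, Finset.sum_insert (by simp only [Finset.mem_Icc]; push_cast; omega), hik]
      have hcast : ((q : ℤ) - (k + 1 : ℕ)) = ((q - (k + 1) : ℕ) : ℤ) := by push_cast; omega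
      rw [hcast, hcnat (q - (k + 1)) (by omega) (by omega)]
      have hexp : q - 1 - (q - (k + 1)) = k := by omega
      rw [hexp]
      rcases Nat.even_or_odd k with he | ho
      · have h2 : ¬ Even (k + 1) := by simp [Nat.even_add_one, Nat.not_even_iff_odd.mpr, he]
        rw [he.neg_one_pow, if_pos he, if_neg h2]
        ring
      · have h2 : Even (k + 1) := Nat.even_add_one.mpr (Nat.not_even_iff_odd.mpr ho)
        rw [ho.neg_one_pow, if_neg (Nat.not_even_iff_odd.mpr ho), if_pos h2]
        ring
  -- the recursion t j = t (j+2) + 1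
  have hstep : ∀ j : ℤ, 0 ≤ j → j ≤ (q : ℤ) - 2 → t j = t (j + 2) + 1 := by
    intro j h0 h2
    rw [hTsum j h0, hTsum (j + 2) (by omega)]
    have hB : (∑ n ∈ Finset.Icc (1 : ℤ) ((q : ℤ) + 3), n * c (j + 2 + n))
        = ∑ m ∈ Finset.Icc (3 : ℤ) ((q : ℤ) + 3), (m - 2) * c (j + m) := by
      have hmap := Finset.map_add_right_Icc (1 : ℤ) ((q : ℤ) + 3) 2
      calc (∑ n ∈ Finset.Icc (1 : ℤ) ((q : ℤ) + 3), n * c (j + 2 + n))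
          = ∑ m ∈ (Finset.Icc (1 : ℤ) ((q : ℤ) + 3)).map (addRightEmbedding 2),
              (m - 2) * c (j + m) := by
            rw [Finset.sum_map]
            apply Finset.sum_congr rfl
            intro n _
            simp only [addRightEmbedding_apply]
            rw [show j + (n + 2) = j + 2 + n by ring]
            ring
        _ = ∑ m ∈ Finset.Icc (3 : ℤ) ((q : ℤ) + 5), (m - 2) * c (j + m) := by
            rw [hmap]
            apply Finset.sum_congr _ (fun x _ => rfl)
            ext x
            simp only [Finset.mem_Icc]
            omega
        _ = ∑ m ∈ Finset.Icc (3 : ℤ) ((q : ℤ) + 3), (m - 2) * c (j + m) := by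
            symm
            apply Finset.sum_subset (Finset.Icc_subset_Icc le_rfl (by omega))
            intro x hx hnx
            simp only [Finset.mem_Icc] at hx hnx
            rw [hc_top (j + x) (by omega), mul_zero]
    rw [hB]
    have hsplitA : Finset.Icc (1 : ℤ) ((q : ℤ) + 3)
        = insert 1 (insert 2 (Finset.Icc (3 : ℤ) ((q : ℤ) + 3))) := by
      ext x
      simp only [Finset.mem_Icc, Finset.mem_insert]
      omega
    rw [hsplitA, Finset.sum_insert (by simp only [Finset.mem_insert, Finset.mem_Icc]; omega),
      Finset.sum_insert (by simp only [Finset.mem_Icc]; omega)]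
    have hdiff : (∑ n ∈ Finset.Icc (3 : ℤ) ((q : ℤ) + 3), n * c (j + n))
        = (∑ n ∈ Finset.Icc (3 : ℤ) ((q : ℤ) + 3), (n - 2) * c (j + n))
          + 2 * ∑ n ∈ Finset.Icc (3 : ℤ) ((q : ℤ) + 3), c (j + n) := by
      rw [Finset.mul_sum, ← Finset.sum_add_distrib]
      apply Finset.sum_congr rfl
      intro n _
      ring
    rw [hdiff]
    -- remains: c (j+1) + 2*c(j+2) + 2 * Σ_{Icc 3 (q+3)} c (j+n) = 1
    have hcomb : (c (j + 2) + ∑ n ∈ Finset.Icc (3 : ℤ) ((q : ℤ) + 3), c (j + n))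
        = ∑ n ∈ Finset.Icc (2 : ℤ) ((q : ℤ) + 3), c (j + n) := by
      have h2 : Finset.Icc (2 : ℤ) ((q : ℤ) + 3)
          = insert 2 (Finset.Icc (3 : ℤ) ((q : ℤ) + 3)) := by
        ext x
        simp only [Finset.mem_Icc, Finset.mem_insert]
        omega
      rw [h2, Finset.sum_insert (by simp only [Finset.mem_Icc]; omega)]
    have hre : (∑ n ∈ Finset.Icc (2 : ℤ) ((q : ℤ) + 3), c (j + n))
        = ∑ i ∈ Finset.Icc (j + 2) (j + ((q : ℤ) + 3)), c i := by
      rw [← Finset.map_add_left_Icc, Finset.sum_map]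
      simp [addLeftEmbedding_apply]
    have htrim : (∑ i ∈ Finset.Icc (j + 2) (j + ((q : ℤ) + 3)), c i)
        = ∑ i ∈ Finset.Icc (j + 2) ((q : ℤ) + 2), c i := by
      symm
      apply Finset.sum_subset (Finset.Icc_subset_Icc le_rfl (by omega))
      intro x hx hnx
      simp only [Finset.mem_Icc] at hx hnx
      exact hc_top x (by omega)
    obtain ⟨k, hk⟩ : ∃ k : ℕ, j = (q : ℤ) - 2 - k := ⟨((q : ℤ) - 2 - j).toNat, by omega⟩
    have hibot : j + 2 = (q : ℤ) - k := by omega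
    have hsum := hpar k (by omega)
    have hc1 : c (j + 1) = (-1) ^ (q - 1 - (q - (k + 1))) := by
      rw [show j + 1 = ((q - (k + 1) : ℕ) : ℤ) by push_cast; omega]
      exact hcnat _ (by omega) (by omega)
    have hfin : c (j + 1)
        + 2 * (c (j + 2) + ∑ n ∈ Finset.Icc (3 : ℤ) ((q : ℤ) + 3), c (j + n)) = 1 := by
      rw [hcomb, hre, htrim, hibot, hsum, hc1, show q - 1 - (q - (k + 1)) = k by omega]
      rcases Nat.even_or_odd k with he | ho
      · rw [he.neg_one_pow, if_pos he]
        ring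
      · rw [ho.neg_one_pow, if_neg (Nat.not_even_iff_odd.mpr ho)]
        ring
    linarith [hfin]
  -- lower bound on t by induction
  have hmain : ∀ k : ℕ, ∀ j : ℤ, 0 ≤ j → j ≤ (q : ℤ) + 1 → (q : ℤ) + 1 - j ≤ k →
      (q : ℤ) + 1 - j ≤ 2 * t j := by
    intro k
    induction k with
    | zero =>
      intro j h0 h1 h2
      have hj : j = (q : ℤ) + 1 := by omega
      rw [hj, hbase ((q : ℤ) + 1) (by omega) le_rfl]
      omega
    | succ k ih =>
      intro j h0 h1 h2
      by_cases hk : (q : ℤ) + 1 - j ≤ k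
      · exact ih j h0 h1 hk
      · by_cases hj : (q : ℤ) - 1 ≤ j
        · rw [hbase j hj h1]
          omega
        · have hrec := hstep j h0 (by omega)
          have hih := ih (j + 2) (by omega) (by omega) (by omega)
          omega
  -- conclude
  intro j h0 h1
  have hT := hmain (q + 2) j h0 h1 (by omega)
  have hTq : (q : ℚ) + 1 - (j : ℚ) ≤ 2 * ((t j : ℤ) : ℚ) := by exact_mod_cast hT
  have hJ0 : (0 : ℚ) ≤ (j : ℚ) := by exact_mod_cast h0
  have hJ1 : (j : ℚ) ≤ (q : ℚ) + 1 := by exact_mod_cast h1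
  have hQ : (4 : ℚ) ≤ (q : ℚ) := by exact_mod_cast hq
  have hn : (0 : ℚ) < 4 * (2 * (q : ℚ) + 3) := by positivity
  have key : (2 * (q : ℚ) + 3 - 2 * (j : ℚ)) ^ 2
      < (1 / 4 + 2 * ((t j : ℤ) : ℚ)) * (4 * (2 * (q : ℚ) + 3)) := by
    nlinarith [mul_nonneg (by linarith : (0 : ℚ) ≤ 2 * (q : ℚ) + 2 - 2 * (j : ℚ))
        (by linarith : (0 : ℚ) ≤ 2 * (j : ℚ)),
      mul_pos (by linarith : (0 : ℚ) < 2 * (q : ℚ) + 3 - 2 * (j : ℚ))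
        (by linarith : (0 : ℚ) < 2 * (q : ℚ) + 2),
      mul_nonneg (by linarith : (0 : ℚ) ≤ 2 * ((t j : ℤ) : ℚ) - ((q : ℚ) + 1 - (j : ℚ)))
        (by linarith : (0 : ℚ) ≤ 2 * (q : ℚ) + 3)]
  have hlt := (div_lt_iff₀ hn).mpr key
  linarith
end

section
/- Let k ≥ 2 be an integer, and define T : ℕ → ℤ by T(j) = k + 1 − ⌊j/2⌋ for 0 ≤ j ≤ 2k+1 and T(2k+2) = 1. Then for every integer j with 0 ≤ j ≤ 2k+2, the rational number (4k+5−2j)²/(4(4k+5)) − 1/4 − 2·T(j) is strictly negative. -/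
/- Let k ≥ 2 and T(j) = k + 1 − ⌊j/2⌋ for 0 ≤ j ≤ 2k+1, T(2k+2) = 1.  Then
for every 0 ≤ j ≤ 2k+2 the d-invariant
(4k+5−2j)²/(4(4k+5)) − 1/4 − 2·T(j) is strictly negative. -/
theorem d_invariants_negative_4k5_surgery (k : ℕ) (hk : 2 ≤ k) (T : ℕ → ℤ)
    (hT1 : ∀ j : ℕ, j ≤ 2 * k + 1 → T j = (k : ℤ) + 1 - ⌊(j : ℚ) / 2⌋)
    (hT2 : T (2 * k + 2) = 1) :
    ∀ j : ℕ, j ≤ 2 * k + 2 →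
      (4 * (k : ℚ) + 5 - 2 * (j : ℚ)) ^ 2 / (4 * (4 * (k : ℚ) + 5))
        - 1 / 4 - 2 * ((T j : ℤ) : ℚ) < 0 := by
  intro j hj
  have hkq : (2:ℚ) ≤ (k:ℚ) := by exact_mod_cast hk
  have ha : (0:ℚ) < 4 * (4 * (k:ℚ) + 5) := by positivity
  rcases eq_or_lt_of_le hj with heq | hlt
  · rw [heq, hT2]
    push_cast
    rw [sub_sub, sub_neg, div_lt_iff₀ ha]
    nlinarith
  · have hj' : j ≤ 2 * k + 1 := by omega
    rw [hT1 j hj']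
    rcases Nat.even_or_odd j with ⟨m, hm⟩ | ⟨m, hm⟩
    · subst hm
      have hmk : m ≤ k := by omega
      have hmkq : (m:ℚ) ≤ (k:ℚ) := by exact_mod_cast hmk
      have hmq : (0:ℚ) ≤ (m:ℚ) := by positivity
      have hf : ⌊((↑(m + m) : ℚ)) / 2⌋ = (m:ℤ) := by
        push_cast
        rw [show ((m:ℚ) + m) / 2 = (m:ℚ) by ring, Int.floor_natCast]
      rw [hf]
      push_cast
      rw [sub_sub, sub_neg, div_lt_iff₀ ha]
      nlinarith [mul_le_mul hmkq hmkq hmq (by linarith : (0:ℚ) ≤ (k:ℚ))]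
    · subst hm
      have hmk : m ≤ k := by omega
      have hmkq : (m:ℚ) ≤ (k:ℚ) := by exact_mod_cast hmk
      have hmq : (0:ℚ) ≤ (m:ℚ) := by positivity
      have hf : ⌊((↑(2 * m + 1) : ℚ)) / 2⌋ = (m:ℤ) := by
        push_cast
        rw [Int.floor_eq_iff]
        constructor
        · push_cast; linarith
        · push_cast; linarith
      rw [hf]
      push_cast
      rw [sub_sub, sub_neg, div_lt_iff₀ ha]
      nlinarith [mul_le_mul hmkq hmkq hmq (by linarith : (0:ℚ) ≤ (k:ℚ))]
end

section
/- Let k ≥ 2 be an integer, and define T : ℕ → ℤ by T(j) = k + 1 − ⌊(j+1)/2⌋ for 0 ≤ j ≤ 2k and T(2k+1) = 1. Then for every integer j with 0 ≤ j ≤ 2k+1, the rational number (4k+3−2j)²/(4(4k+3)) − 1/4 − 2·T(j) is strictly negative. -/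
/- Let k ≥ 2 and T(j) = k + 1 − ⌊(j+1)/2⌋ for 0 ≤ j ≤ 2k, T(2k+1) = 1.  Then
for every 0 ≤ j ≤ 2k+1 the d-invariant
(4k+3−2j)²/(4(4k+3)) − 1/4 − 2·T(j) is strictly negative. -/
theorem d_invariants_negative_4k3_surgery (k : ℕ) (hk : 2 ≤ k) (T : ℕ → ℤ)
    (hT1 : ∀ j : ℕ, j ≤ 2 * k → T j = (k : ℤ) + 1 - ⌊((j : ℚ) + 1) / 2⌋)
    (hT2 : T (2 * k + 1) = 1) :
    ∀ j : ℕ, j ≤ 2 * k + 1 →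
      (4 * (k : ℚ) + 3 - 2 * (j : ℚ)) ^ 2 / (4 * (4 * (k : ℚ) + 3))
        - 1 / 4 - 2 * ((T j : ℤ) : ℚ) < 0 := by
  intro j hj
  have hk' : (2:ℚ) ≤ (k:ℚ) := by exact_mod_cast hk
  have hD : (0:ℚ) < 4 * (4 * (k:ℚ) + 3) := by positivity
  rcases hj.lt_or_eq with h | h
  · -- j ≤ 2k
    have hj2 : j ≤ 2 * k := by omega
    rw [hT1 j hj2]
    have hF : (⌊((j : ℚ) + 1) / 2⌋ : ℚ) ≤ ((j:ℚ) + 1) / 2 := Int.floor_le _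
    have hj' : (j:ℚ) ≤ 2 * (k:ℚ) := by exact_mod_cast hj2
    have hj0 : (0:ℚ) ≤ (j:ℚ) := by positivity
    have key : (4 * (k : ℚ) + 3 - 2 * (j : ℚ)) ^ 2 / (4 * (4 * (k : ℚ) + 3))
        < 1 / 4 + 2 * (((k : ℤ) + 1 - ⌊((j : ℚ) + 1) / 2⌋ : ℤ) : ℚ) := by
      rw [div_lt_iff₀ hD]
      push_cast
      nlinarith [mul_nonneg hj0 (sub_nonneg.mpr hj'), sq_nonneg ((j:ℚ)),
        mul_nonneg hj0 hj0, mul_le_mul_of_nonneg_left hF (le_of_lt hD)]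
    linarith
  · subst h
    rw [hT2]
    have key : (4 * (k : ℚ) + 3 - 2 * ((2*k+1 : ℕ) : ℚ)) ^ 2 / (4 * (4 * (k : ℚ) + 3))
        < 1 / 4 + 2 * ((1 : ℤ) : ℚ) := by
      rw [div_lt_iff₀ hD]
      push_cast
      nlinarith
    push_cast at key ⊢
    linarith
end

section
/- Define V : ℤ → ℤ by V(s) = 2 for s ≤ 1, V(s) = 1 for 2 ≤ s ≤ 4, and V(s) = 0 for s ≥ 5. Then for every integer p ≥ 1 and every integer i with 0 ≤ i ≤ 10p, writing j for the residue of i modulo p (0 ≤ j ≤ p−1), the rational number (11p−2i)²/(4p(10p+1)) − (p−2j)²/(4p) − 2·max{ V(⌊i/p⌋), V(−⌊(i−10p−1)/p⌋) } is less than or equal to 0. (By the Ni–Wu formula and Ozsváth–Szabó's lens space recursion, this says that all d-invariants of the (10p+1)/p-surgery on S³ along the pretzel knot P(-2,3,7) are non-positive.) -/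
private lemma helperQ (p i j M : ℚ) (hp : 1 ≤ p)
    (hN : (11 * p - 2 * i) ^ 2 ≤ (10 * p + 1) * (p - 2 * j) ^ 2 + 8 * p * (10 * p + 1) * M) :
    (11 * p - 2 * i) ^ 2 / (4 * p * (10 * p + 1)) - (p - 2 * j) ^ 2 / (4 * p) - 2 * M ≤ 0 := by
  have hp0 : p ≠ 0 := by linarith
  have h2 : (0:ℚ) < 4 * p * (10 * p + 1) := by nlinarith
  have e1 : (11 * p - 2 * i) ^ 2 / (4 * p * (10 * p + 1)) - (p - 2 * j) ^ 2 / (4 * p) - 2 * M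
      = ((11 * p - 2 * i) ^ 2 - ((10 * p + 1) * (p - 2 * j) ^ 2 + 8 * p * (10 * p + 1) * M))
        * (4 * p * (10 * p + 1))⁻¹ := by
    field_simp
    ring
  rw [e1]
  exact mul_nonpos_of_nonpos_of_nonneg (by linarith) (inv_nonneg.mpr h2.le)

set_option maxHeartbeats 2000000 in
theorem d_invariants_nonpos_rational_surgery_P237 (V : ℤ → ℤ)
    (hV1 : ∀ s : ℤ, s ≤ 1 → V s = 2)
    (hV2 : ∀ s : ℤ, 2 ≤ s → s ≤ 4 → V s = 1)
    (hV3 : ∀ s : ℤ, 5 ≤ s → V s = 0) :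
    ∀ p : ℤ, 1 ≤ p → ∀ i : ℤ, 0 ≤ i → i ≤ 10 * p →
      (11 * (p : ℚ) - 2 * (i : ℚ)) ^ 2 / (4 * (p : ℚ) * (10 * (p : ℚ) + 1))
        - ((p : ℚ) - 2 * ((i % p : ℤ) : ℚ)) ^ 2 / (4 * (p : ℚ))
        - 2 * ((max (V (Int.fdiv i p)) (V (-(Int.fdiv (i - 10 * p - 1) p))) : ℤ) : ℚ)
        ≤ 0 := by
  intro p hp i hi0 hi1
  have hp0 : (0:ℤ) < p := by linarith
  have hpne : p ≠ 0 := hp0.ne'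
  obtain ⟨j, hjdef⟩ : ∃ j, i % p = j := ⟨_, rfl⟩
  obtain ⟨q, hqdef⟩ : ∃ q, Int.fdiv i p = q := ⟨_, rfl⟩
  obtain ⟨r, hrdef⟩ : ∃ r, -(Int.fdiv (i - 10 * p - 1) p) = r := ⟨_, rfl⟩
  have hqe : q = i / p := by rw [← hqdef]; exact Int.fdiv_eq_ediv_of_nonneg i hp0.le
  have hij : i = p * q + j := by rw [hqe, ← hjdef]; exact (Int.mul_ediv_add_emod i p).symm
  have hj0 : 0 ≤ j := hjdef ▸ Int.emod_nonneg i hpne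
  have hjp : j < p := hjdef ▸ Int.emod_lt_of_pos i hp0
  have hq0 : 0 ≤ q := hqe ▸ Int.ediv_nonneg hi0 hp0.le
  have hq10 : q ≤ 10 := by
    have h1 : i / p ≤ (10 * p) / p := Int.ediv_le_ediv hp0 hi1
    have h2 : (10 * p) / p = 10 := by
      rw [mul_comm]; exact Int.mul_ediv_cancel_left 10 hpne
    omega
  have hr : (1 ≤ j ∧ r = 10 - q) ∨ (j = 0 ∧ r = 11 - q) := by
    have hfe : (i - 10 * p - 1).fdiv p = (i - 10 * p - 1) / p :=
      Int.fdiv_eq_ediv_of_nonneg _ hp0.le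
    rcases eq_or_lt_of_le hj0 with hj | hj
    · right
      refine ⟨hj.symm, ?_⟩
      have he : i - 10 * p - 1 = (p - 1) + p * (q - 11) := by rw [hij, ← hj]; ring
      rw [← hrdef, hfe, he, Int.add_mul_ediv_left _ _ hpne,
        Int.ediv_eq_zero_of_lt (by omega) (by omega)]
      ring
    · left
      refine ⟨hj, ?_⟩
      have he : i - 10 * p - 1 = (j - 1) + p * (q - 10) := by rw [hij]; ring
      rw [← hrdef, hfe, he, Int.add_mul_ediv_left _ _ hpne,
        Int.ediv_eq_zero_of_lt (by omega) (by omega)]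
      ring
  have hpQ : (1:ℚ) ≤ (p:ℚ) := by exact_mod_cast hp
  have hpQ0 : (0:ℚ) ≤ (p:ℚ) := by linarith
  have hiQ : (i:ℚ) = (p:ℚ) * (q:ℚ) + (j:ℚ) := by exact_mod_cast congrArg (Int.cast : ℤ → ℚ) hij
  have hjQ0 : (0:ℚ) ≤ (j:ℚ) := by exact_mod_cast hj0
  have hjQp : (j:ℚ) ≤ (p:ℚ) - 1 := by
    have : j ≤ p - 1 := by omega
    exact_mod_cast this
  rw [hjdef, hqdef, hrdef, hiQ]
  have key : ∀ M : ℤ,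
      (11 * (p:ℚ) - 2 * ((p:ℚ) * (q:ℚ) + (j:ℚ))) ^ 2
        ≤ (10 * (p:ℚ) + 1) * ((p:ℚ) - 2 * (j:ℚ)) ^ 2 + 8 * (p:ℚ) * (10 * (p:ℚ) + 1) * (M:ℚ) →
      (11 * (p : ℚ) - 2 * ((p:ℚ) * (q:ℚ) + (j:ℚ))) ^ 2 / (4 * (p : ℚ) * (10 * (p : ℚ) + 1))
        - ((p : ℚ) - 2 * (j : ℚ)) ^ 2 / (4 * (p : ℚ)) - 2 * ((M:ℤ) : ℚ) ≤ 0 :=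
    fun M hN => helperQ _ _ _ _ hpQ hN
  interval_cases q <;> rcases hr with ⟨hj1, hrv⟩ | ⟨hj1, hrv⟩ <;> rw [hrv] <;>
    [(rw [hV1 0 (by norm_num), hV3 (10-0) (by norm_num)]; apply key 2);
     (rw [hV1 0 (by norm_num), hV3 (11-0) (by norm_num)]; apply key 2);
     (rw [hV1 1 (by norm_num), hV3 (10-1) (by norm_num)]; apply key 2);
     (rw [hV1 1 (by norm_num), hV3 (11-1) (by norm_num)]; apply key 2);
     (rw [hV2 2 (by norm_num) (by norm_num), hV3 (10-2) (by norm_num)]; apply key 1);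
     (rw [hV2 2 (by norm_num) (by norm_num), hV3 (11-2) (by norm_num)]; apply key 1);
     (rw [hV2 3 (by norm_num) (by norm_num), hV3 (10-3) (by norm_num)]; apply key 1);
     (rw [hV2 3 (by norm_num) (by norm_num), hV3 (11-3) (by norm_num)]; apply key 1);
     (rw [hV2 4 (by norm_num) (by norm_num), hV3 (10-4) (by norm_num)]; apply key 1);
     (rw [hV2 4 (by norm_num) (by norm_num), hV3 (11-4) (by norm_num)]; apply key 1);
     (rw [hV3 5 (by norm_num), hV3 (10-5) (by norm_num)]; apply key 0);
     (rw [hV3 5 (by norm_num), hV3 (11-5) (by norm_num)]; apply key 0);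
     (rw [hV3 6 (by norm_num), hV2 (10-6) (by norm_num) (by norm_num)]; apply key 1);
     (rw [hV3 6 (by norm_num), hV3 (11-6) (by norm_num)]; apply key 0);
     (rw [hV3 7 (by norm_num), hV2 (10-7) (by norm_num) (by norm_num)]; apply key 1);
     (rw [hV3 7 (by norm_num), hV2 (11-7) (by norm_num) (by norm_num)]; apply key 1);
     (rw [hV3 8 (by norm_num), hV2 (10-8) (by norm_num) (by norm_num)]; apply key 1);
     (rw [hV3 8 (by norm_num), hV2 (11-8) (by norm_num) (by norm_num)]; apply key 1);
     (rw [hV3 9 (by norm_num), hV1 (10-9) (by norm_num)]; apply key 2);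
     (rw [hV3 9 (by norm_num), hV2 (11-9) (by norm_num) (by norm_num)]; apply key 1);
     (exact absurd hij (by omega));
     (rw [hV3 10 (by norm_num), hV1 (11-10) (by norm_num)]; apply key 2)] <;>
    all_goals push_cast
  · nlinarith [mul_nonneg hpQ0 (sq_nonneg (20*(j:ℚ) - 10*(p:ℚ) + (10))), hpQ, hjQ0, hjQp,
      sq_nonneg ((p:ℚ)), mul_nonneg hpQ0 hpQ0]
  · nlinarith [mul_nonneg hpQ0 (sq_nonneg (20*(j:ℚ) - 10*(p:ℚ) + (10))), hpQ, hjQ0, hjQp,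
      sq_nonneg ((p:ℚ)), mul_nonneg hpQ0 hpQ0]
  · nlinarith [mul_nonneg hpQ0 (sq_nonneg (20*(j:ℚ) - 10*(p:ℚ) + (8))), hpQ, hjQ0, hjQp,
      sq_nonneg ((p:ℚ)), mul_nonneg hpQ0 hpQ0]
  · nlinarith [mul_nonneg hpQ0 (sq_nonneg (20*(j:ℚ) - 10*(p:ℚ) + (8))), hpQ, hjQ0, hjQp,
      sq_nonneg ((p:ℚ)), mul_nonneg hpQ0 hpQ0]
  · nlinarith [mul_nonneg hpQ0 (sq_nonneg (20*(j:ℚ) - 10*(p:ℚ) + (6))), hpQ, hjQ0, hjQp,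
      sq_nonneg ((p:ℚ)), mul_nonneg hpQ0 hpQ0]
  · nlinarith [mul_nonneg hpQ0 (sq_nonneg (20*(j:ℚ) - 10*(p:ℚ) + (6))), hpQ, hjQ0, hjQp,
      sq_nonneg ((p:ℚ)), mul_nonneg hpQ0 hpQ0]
  · nlinarith [mul_nonneg hpQ0 (sq_nonneg (20*(j:ℚ) - 10*(p:ℚ) + (4))), hpQ, hjQ0, hjQp,
      sq_nonneg ((p:ℚ)), mul_nonneg hpQ0 hpQ0]
  · nlinarith [mul_nonneg hpQ0 (sq_nonneg (20*(j:ℚ) - 10*(p:ℚ) + (4))), hpQ, hjQ0, hjQp,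
      sq_nonneg ((p:ℚ)), mul_nonneg hpQ0 hpQ0]
  · nlinarith [mul_nonneg hpQ0 (sq_nonneg (20*(j:ℚ) - 10*(p:ℚ) + (2))), hpQ, hjQ0, hjQp,
      sq_nonneg ((p:ℚ)), mul_nonneg hpQ0 hpQ0]
  · nlinarith [mul_nonneg hpQ0 (sq_nonneg (20*(j:ℚ) - 10*(p:ℚ) + (2))), hpQ, hjQ0, hjQp,
      sq_nonneg ((p:ℚ)), mul_nonneg hpQ0 hpQ0]
  · nlinarith [mul_nonneg hpQ0 (sq_nonneg (20*(j:ℚ) - 10*(p:ℚ) + (0))), hpQ, hjQ0, hjQp,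
      sq_nonneg ((p:ℚ)), mul_nonneg hpQ0 hpQ0]
  · nlinarith [mul_nonneg hpQ0 (sq_nonneg (20*(j:ℚ) - 10*(p:ℚ) + (0))), hpQ, hjQ0, hjQp,
      sq_nonneg ((p:ℚ)), mul_nonneg hpQ0 hpQ0]
  · nlinarith [mul_nonneg hpQ0 (sq_nonneg (20*(j:ℚ) - 10*(p:ℚ) + (-2))), hpQ, hjQ0, hjQp,
      sq_nonneg ((p:ℚ)), mul_nonneg hpQ0 hpQ0]
  · rw [hj1]
    push_cast
    nlinarith [hpQ, mul_nonneg (mul_nonneg hpQ0 hpQ0) hpQ0, sq_nonneg ((p:ℚ))]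
  · nlinarith [mul_nonneg hpQ0 (sq_nonneg (20*(j:ℚ) - 10*(p:ℚ) + (-4))), hpQ, hjQ0, hjQp,
      sq_nonneg ((p:ℚ)), mul_nonneg hpQ0 hpQ0]
  · nlinarith [mul_nonneg hpQ0 (sq_nonneg (20*(j:ℚ) - 10*(p:ℚ) + (-4))), hpQ, hjQ0, hjQp,
      sq_nonneg ((p:ℚ)), mul_nonneg hpQ0 hpQ0]
  · nlinarith [mul_nonneg hpQ0 (sq_nonneg (20*(j:ℚ) - 10*(p:ℚ) + (-6))), hpQ, hjQ0, hjQp,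
      sq_nonneg ((p:ℚ)), mul_nonneg hpQ0 hpQ0]
  · nlinarith [mul_nonneg hpQ0 (sq_nonneg (20*(j:ℚ) - 10*(p:ℚ) + (-6))), hpQ, hjQ0, hjQp,
      sq_nonneg ((p:ℚ)), mul_nonneg hpQ0 hpQ0]
  · nlinarith [mul_nonneg hpQ0 (sq_nonneg (20*(j:ℚ) - 10*(p:ℚ) + (-8))), hpQ, hjQ0, hjQp,
      sq_nonneg ((p:ℚ)), mul_nonneg hpQ0 hpQ0]
  · nlinarith [mul_nonneg hpQ0 (sq_nonneg (20*(j:ℚ) - 10*(p:ℚ) + (-8))), hpQ, hjQ0, hjQp,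
      sq_nonneg ((p:ℚ)), mul_nonneg hpQ0 hpQ0]
  · nlinarith [mul_nonneg hpQ0 (sq_nonneg (20*(j:ℚ) - 10*(p:ℚ) + (-10))), hpQ, hjQ0, hjQp,
      sq_nonneg ((p:ℚ)), mul_nonneg hpQ0 hpQ0]
end
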